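/- Base case of rule synthesis: for every example e, CompR(ConstRule(e), [e]) holds, i.e., the constant symbolic rule built from a single example is complete for the singleton list containing that example. -/

import Mathlib

/-! Formalization of the Fixit DSL (NoFAQ) and its synthesis algorithm. -/

/-- An example: a buggy command, an error message and a fixed command,
each given as the list of its space-separated strings. -/
structure Ex where
  cmd : List String
  err : List String
  fix : List String
deriving DecidableEq

/-- Match expressions of the Fixit DSL. -/
inductive MatchExpr where
  | str (s : String)
  | varMatch (i : ℕ) (l r : String)
deriving DecidableEq

/-- Position expressions of the Fixit DSL. -/
inductive PosExpr where
  | ipos (k : ℤ)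
  | cpos (c : Char) (k δ : ℤ)
deriving DecidableEq

/-- A Sub-lr substring-extraction expression `Sub-lr(pL, pR, l, r, Var(i))`. -/
structure SubLR where
  pL : PosExpr
  pR : PosExpr
  l : String
  r : String
  i : ℕ
deriving DecidableEq

/-- Fix expressions of the Fixit DSL. -/
inductive FixExpr where
  | fstr (s : String)
  | sub (u : SubLR)
deriving DecidableEq

/-- Left or right position. -/
inductive Side where
  | left
  | right
deriving DecidableEq

/-- Indices of the occurrences of character `c` in string `s`, in increasing order. -/
def indices (s : String) (c : Char) : List ℕ :=
  (List.range s.length).filter (fun i => s.toList[i]? == some c)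

/-- Evaluation of a position expression on a string (`d` tells whether it is used
as a left or right position).  Returns `none` when undefined. -/
def evalPos (p : PosExpr) (s : String) (d : Side) : Option ℤ :=
  match p with
  | .ipos k =>
      if 0 < k then some k
      else if k < 0 then some ((s.length : ℤ) + k)
      else
        match d with
        | .left => some 0
        | .right => some (s.length : ℤ)
  | .cpos c k δ =>
      let I := indices s c
      if 0 < k then
        match I[k.toNat - 1]? with
        | some idx => some ((idx : ℤ) + δ)
        | none => none
      else if k < 0 then
        if 0 ≤ (I.length : ℤ) + k then
          match I[((I.length : ℤ) + k).toNat]? with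
          | some idx => some ((idx : ℤ) + δ)
          | none => none
        else none
      else none

/-- `substr? s jL jR` is the substring of `s` from index `jL` (inclusive) to `jR`
(exclusive); it is undefined when an index is negative or exceeds `|s|`. -/
def substr? (s : String) (jL jR : ℤ) : Option String :=
  if 0 ≤ jL ∧ jL ≤ (s.length : ℤ) ∧ 0 ≤ jR ∧ jR ≤ (s.length : ℤ) then
    some (String.ofList ((s.toList.drop jL.toNat).take (jR.toNat - jL.toNat)))
  else none

/-- Evaluation of a Sub-lr expression under a binding `σ`. -/
def evalSub (u : SubLR) (σ : ℕ → Option String) : Option String := do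
  let s ← σ u.i
  let jL ← evalPos u.pL s .left
  let jR ← evalPos u.pR s .right
  let m ← substr? s jL jR
  return u.l ++ m ++ u.r

/-- Evaluation of a fix expression under a binding `σ`. -/
def evalFix (f : FixExpr) (σ : ℕ → Option String) : Option String :=
  match f with
  | .fstr s => some s
  | .sub u => evalSub u σ

/-- Matching one match expression against one string, producing a binding. -/
def matchExpr (m : MatchExpr) (s : String) : Option (ℕ → Option String) :=
  match m with
  | .str t => if t = s then some (fun _ => none) else none
  | .varMatch i l r =>
      -- `s = l ++ δ ++ r` for some `δ`
      if l.isPrefixOf s && r.toList.isSuffixOf s.toList &&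
          decide (l.length + r.length ≤ s.length) then
        some (fun j => if j = i then some s else none)
      else none

/-- Combination of two bindings (the first takes precedence). -/
def combine (σ1 σ2 : ℕ → Option String) : ℕ → Option String :=
  fun j => (σ1 j).orElse (fun _ => σ2 j)

/-- Unification of a list of match expressions with a list of strings. -/
def unify : List MatchExpr → List String → Option (ℕ → Option String)
  | [], [] => some (fun _ => none)
  | m :: ms, s :: ss => do
      let σ1 ← matchExpr m s
      let σ2 ← unify ms ss
      return combine σ1 σ2
  | _, _ => none

/-- A concrete Fixit rule `match cmd and err → fix`. -/
structure Rule where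
  cmd : List MatchExpr
  err : List MatchExpr
  fix : List FixExpr

/-- The semantics of a concrete Fixit rule on an input command and error message. -/
def applyRule (r : Rule) (scmd serr : List String) : Option (List String) := do
  let σ1 ← unify r.cmd scmd
  let σ2 ← unify r.err serr
  r.fix.mapM (fun f => evalFix f (combine σ1 σ2))

/-- A rule is consistent with an example when it maps the buggy command and
error message to the fixed command. -/
def consistent (r : Rule) (e : Ex) : Prop :=
  applyRule r e.cmd e.err = some e.fix

/-- Elements of a symbolic fix list: a constant or a finite set of Sub-lr expressions. -/
inductive SymFix where
  | fstr (s : String)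
  | subs (S : Finset SubLR)

/-- A symbolic rule, compactly representing a set of concrete Fixit rules. -/
structure SymbRule where
  cmd : List MatchExpr
  err : List MatchExpr
  fix : List SymFix

/-- Concretization of one symbolic fix element. -/
def conFixElem : SymFix → FixExpr → Prop
  | .fstr s, .fstr s' => s' = s
  | .subs S, .sub u => u ∈ S
  | _, _ => False

/-- Concretization of a symbolic fix list. -/
def conFix (sf : List SymFix) (f : List FixExpr) : Prop :=
  List.Forall₂ conFixElem sf f

/-- The set of concrete rules represented by a symbolic rule. -/
def con (R : SymbRule) : Set Rule :=
  {r | r.cmd = R.cmd ∧ r.err = R.err ∧ conFix R.fix r.fix}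

/-- The constant symbolic rule built from a single example. -/
def ConstRule (e : Ex) : SymbRule :=
  ⟨e.cmd.map MatchExpr.str, e.err.map MatchExpr.str, e.fix.map SymFix.fstr⟩

/-- Longest common prefix of two lists of characters. -/
def lcpList : List Char → List Char → List Char
  | a :: as, b :: bs => if a = b then a :: lcpList as bs else []
  | _, _ => []

/-- Longest common prefix of two strings. -/
def lcpStr (s t : String) : String := String.ofList (lcpList s.toList t.toList)

/-- Longest common suffix of two strings. -/
def lcsStr (s t : String) : String := String.ofList ((lcpList s.toList.reverse t.toList.reverse).reverse)

/-- `FindVariables` introduces and refines variable match expressions so that the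
match expressions also match a new input (`o` is the offset of variable indices). -/
def FindVariables : List String → List MatchExpr → ℕ → Option (List MatchExpr × Finset ℕ)
  | [], [], _ => some ([], ∅)
  | s :: ss, t :: ts, o => do
      let (ms, V) ← FindVariables ss ts (o + 1)
      match t with
      | .str s' =>
          if s' = s then some (MatchExpr.str s' :: ms, V)
          else some (MatchExpr.varMatch o (lcpStr s' s) (lcsStr s' s) :: ms, insert o V)
      | .varMatch j l r =>
          some (MatchExpr.varMatch j (lcpStr l s) (lcsStr r s) :: ms, insert j V)
  | _, _, _ => none

/-- The binding associated with an example: variable `j` is bound to the `j`-th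
string of `scmd ++ serr`. -/
def exBind (e : Ex) : ℕ → Option String := fun j => (e.cmd ++ e.err)[j]?

/-- A Sub-lr expression is consistent with example `e` at output position `i` when,
under the example's binding, it evaluates to the `i`-th string of the fix. -/
def subConsistent (u : SubLR) (e : Ex) (i : ℕ) : Prop :=
  evalSub u (exBind e) = e.fix[i]? ∧ (e.fix[i]?).isSome

instance (u : SubLR) (e : Ex) (i : ℕ) : Decidable (subConsistent u e i) := by
  unfold subConsistent; infer_instance

/-- The integers `-n, …, n`. -/
def intRange (n : ℕ) : List ℤ :=
  (List.range (2 * n + 1)).map (fun k => (k : ℤ) - (n : ℤ))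

/-- Candidate position expressions for a string `s` (complete: any position
expression defined on `s` and yielding an index in `[0, |s|]` is equivalent to
one in this list). -/
def posCands (s : String) : List PosExpr :=
  (intRange s.length).map PosExpr.ipos ++
  s.toList.flatMap (fun c =>
    (intRange s.length).flatMap (fun k =>
      (intRange s.length).map (fun δ => PosExpr.cpos c k δ)))

/-- All prefixes of a string. -/
def prefixes (t : String) : List String :=
  (List.range (t.length + 1)).map (fun a => String.ofList (t.toList.take a))

/-- All suffixes of a string. -/
def suffixes (t : String) : List String :=
  (List.range (t.length + 1)).map (fun a => String.ofList (t.toList.drop a))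

/-- Candidate Sub-lr expressions for example `e`, variables `V`, output position `i`. -/
noncomputable def subCands (e : Ex) (V : Finset ℕ) (i : ℕ) : List SubLR :=
  match e.fix[i]? with
  | none => []
  | some t =>
      V.toList.flatMap (fun j =>
        match exBind e j with
        | none => []
        | some s =>
            (posCands s).flatMap (fun pL =>
              (posCands s).flatMap (fun pR =>
                (prefixes t).flatMap (fun l =>
                  (suffixes t).map (fun r => SubLR.mk pL pR l r j)))))

/-- `AllSubstrings e V i`: the set of all Sub-lr expressions over variables in `V`
that evaluate to the `i`-th string of `e`'s fix under `e`'s binding. -/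
noncomputable def AllSubstrings (e : Ex) (V : Finset ℕ) (i : ℕ) : Finset SubLR :=
  (subCands e V i).toFinset.filter (fun u => subConsistent u e i)

/-- `SynthSubstrings (e :: E) V i`: start from `AllSubstrings e V i` and filter by
consistency with each example in `E`. -/
noncomputable def SynthSubstrings : List Ex → Finset ℕ → ℕ → Finset SubLR
  | [], _, _ => ∅
  | e :: E, V, i =>
      E.foldl (fun F e' => F.filter (fun u => subConsistent u e' i)) (AllSubstrings e V i)

/-- Helper of `SynthFix` keeping track of the current output position. -/
noncomputable def SynthFixAux : List String → List SymFix → List Ex → Finset ℕ → ℕ → Option (List SymFix)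
  | [], [], _, _, _ => some []
  | s :: S, t :: T, E, V, i => do
      let rest ← SynthFixAux S T E V (i + 1)
      match t with
      | .fstr s' =>
          if s' = s then some (SymFix.fstr s' :: rest)
          else some (SymFix.subs (SynthSubstrings E V i) :: rest)
      | .subs _ => some (SymFix.subs (SynthSubstrings E V i) :: rest)
  | _, _, _, _, _ => none

/-- `SynthFix S T E V`: refine the symbolic fix list `T` (the `i`-th element is kept
if it is the constant `S[i]`, otherwise it becomes `SynthSubstrings E V i`). -/
noncomputable def SynthFix (S : List String) (T : List SymFix) (E : List Ex) (V : Finset ℕ) :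
    Option (List SymFix) :=
  SynthFixAux S T E V 0

/-- `RefineRule r E e` refines the symbolic rule `r` (consistent with `E`) so that
it also accounts for the new example `e`. -/
noncomputable def RefineRule (r : SymbRule) (E : List Ex) (e : Ex) : Option SymbRule := do
  let (cmd', Vc) ← FindVariables e.cmd r.cmd 0
  let (err', Ve) ← FindVariables e.err r.err e.cmd.length
  let fix' ← SynthFix e.fix r.fix (e :: E) (Vc ∪ Ve)
  some ⟨cmd', err', fix'⟩

/-- Helper of `SynthRules`: iteratively refine on each remaining example. -/
noncomputable def SynthRulesAux : SymbRule → List Ex → List Ex → Option SymbRule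
  | r, _, [] => some r
  | r, seen, e :: rest => do
      let r' ← RefineRule r seen e
      SynthRulesAux r' (seen ++ [e]) rest

/-- The synthesis algorithm: start with the constant rule of the first example and
refine on each further example; `none` (⊥) if any step fails. -/
noncomputable def SynthRules : List Ex → Option SymbRule
  | [] => none
  | e :: E => SynthRulesAux (ConstRule e) [e] E

/-- Completeness of the command-match part of a symbolic rule w.r.t. examples `E`,
producing the variables `V`. -/
def CompC (cmd : List MatchExpr) (E : List Ex) (V : Finset ℕ) : Prop :=
  ∀ i < cmd.length,
    (∀ s : String, cmd[i]? = some (MatchExpr.str s) ↔ ∀ e ∈ E, e.cmd[i]? = some s) ∧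
    ((∃ l r, cmd[i]? = some (MatchExpr.varMatch i l r)) ↔
      (i ∈ V ∧ ∃ e1 ∈ E, ∃ e2 ∈ E, e1.cmd[i]? ≠ e2.cmd[i]?)) ∧
    (∀ j l r, cmd[i]? = some (MatchExpr.varMatch j l r) →
      j = i ∧
      (∀ e ∈ E, ∀ t, e.cmd[i]? = some t → l.toList <+: t.toList) ∧
      (∀ l' : String,
        (∀ e ∈ E, ∀ t, e.cmd[i]? = some t → l'.toList <+: t.toList) →
        l'.length ≤ l.length) ∧
      (∀ e ∈ E, ∀ t, e.cmd[i]? = some t → r.toList <:+ t.toList) ∧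
      (∀ r' : String,
        (∀ e ∈ E, ∀ t, e.cmd[i]? = some t → r'.toList <:+ t.toList) →
        r'.length ≤ r.length))

/-- Completeness of the error-match part of a symbolic rule w.r.t. examples `E`,
where `a` is the length of the examples' command components (the variable index at
error position `i` is `i + a`), producing the variables `V`. -/
def CompE (a : ℕ) (err : List MatchExpr) (E : List Ex) (V : Finset ℕ) : Prop :=
  ∀ i < err.length,
    (∀ s : String, err[i]? = some (MatchExpr.str s) ↔ ∀ e ∈ E, e.err[i]? = some s) ∧
    ((∃ l r, err[i]? = some (MatchExpr.varMatch (i + a) l r)) ↔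
      ((i + a) ∈ V ∧ ∃ e1 ∈ E, ∃ e2 ∈ E, e1.err[i]? ≠ e2.err[i]?)) ∧
    (∀ j l r, err[i]? = some (MatchExpr.varMatch j l r) →
      j = i + a ∧
      (∀ e ∈ E, ∀ t, e.err[i]? = some t → l.toList <+: t.toList) ∧
      (∀ l' : String,
        (∀ e ∈ E, ∀ t, e.err[i]? = some t → l'.toList <+: t.toList) →
        l'.length ≤ l.length) ∧
      (∀ e ∈ E, ∀ t, e.err[i]? = some t → r.toList <:+ t.toList) ∧
      (∀ r' : String,
        (∀ e ∈ E, ∀ t, e.err[i]? = some t → r'.toList <:+ t.toList) →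
        r'.length ≤ r.length))

/-- Input completeness of a symbolic rule. -/
def Comp (cmd err : List MatchExpr) (E : List Ex) (V : Finset ℕ) : Prop :=
  ∃ V1 V2, CompC cmd E V1 ∧ CompE cmd.length err E V2 ∧ V = V1 ∪ V2

/-- Partial completeness of a symbolic fix list. -/
def PCompF (fixes : List SymFix) (E : List Ex) : Prop :=
  ∀ i < fixes.length,
    ∀ s : String, fixes[i]? = some (SymFix.fstr s) ↔ ∀ e ∈ E, e.fix[i]? = some s

/-- Completeness of a symbolic fix list w.r.t. examples `E` and variables `V`. -/
def CompF (fixes : List SymFix) (E : List Ex) (V : Finset ℕ) : Prop :=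
  PCompF fixes E ∧
  ∀ i < fixes.length, ∀ S : Finset SubLR, fixes[i]? = some (SymFix.subs S) →
    ∀ u : SubLR, u ∈ S ↔ (u.i ∈ V ∧ ∀ e ∈ E, subConsistent u e i)

/-- Completeness of a symbolic rule w.r.t. a list of examples. -/
def CompR (r : SymbRule) (E : List Ex) : Prop :=
  ∃ V, Comp r.cmd r.err E V ∧ CompF r.fix E V

/-- Size of an example. -/
def exSize (e : Ex) : ℕ := e.cmd.length + e.err.length + e.fix.length

/-- Size of a concrete rule. -/
def ruleSize (r : Rule) : ℕ := r.cmd.length + r.err.length + r.fix.length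

/-- Maximum length of a string appearing in an example. -/
def maxLen (e : Ex) : ℕ :=
  ((e.cmd ++ e.err ++ e.fix).map String.length).foldr max 0

/-- A Sub-lr expression has small offsets when every `Cpos` position in it has
offset `δ ∈ {-1, 0, 1}`. -/
def smallOffset (u : SubLR) : Bool :=
  (match u.pL with
    | .ipos _ => true
    | .cpos _ _ δ => δ == -1 || δ == 0 || δ == 1) &&
  (match u.pR with
    | .ipos _ => true
    | .cpos _ _ δ => δ == -1 || δ == 0 || δ == 1)

theorem compC_map_str (e : Ex) : CompC (e.cmd.map MatchExpr.str) [e] ∅ :=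
  fun i _ => by simp

theorem compE_map_str (a : ℕ) (e : Ex) : CompE a (e.err.map MatchExpr.str) [e] ∅ :=
  fun i _ => by simp

theorem compF_map_fstr (e : Ex) (V : Finset ℕ) : CompF (e.fix.map SymFix.fstr) [e] V :=
  ⟨fun i _ s => by simp, fun i _ S h => by simp at h⟩

/-- **Base case of rule synthesis.**
For every example `e`, the constant symbolic rule `ConstRule e` is complete for the
singleton list `[e]`. -/
theorem constRule_complete (e : Ex) : CompR (ConstRule e) [e] :=
  ⟨∅, ⟨∅, ∅, compC_map_str e, compE_map_str _ e, rfl⟩, compF_map_fstr e ∅⟩
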